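/- Let G be a finite connected unweighted graph with diameter D ≥ 1, and for an s-t graph G' define tri(G') = max over v ∈ V(G') of (d_{G'}(s(G'), v) + d_{G'}(v, t(G'))). Then for every k ≥ 1, tri(G̃^{⊘k}) ≤ len(G̃^{⊘k}) · (1 + 1/(9D − 1)). -/

import Mathlib

/-!
Call an `s`-`t` graph `γ`-tri-bounded when every vertex detour `d(s,v) + d(v,t)` and every edge
detour `d(s,e⁻) + γ·ℓ(e) + d(e⁺,t)` is at most `γ · len`. In `H ⊘ T` the distances between
vertices of `H` are those of `H`, and inside the copy of `T` on `e` they are at most those of `T`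
scaled by `ℓ(e)/len T`. So if `T` is `γ`-tri-bounded, every detour through the copy on `e` is
bounded by the edge detour of `e` in `H`, and `γ`-tri-boundedness passes from `H` and `T` to
`H ⊘ T`; the unit edge has it for every `γ ≥ 1`.

In `G̃` the height `h(s) = 0`, `h(s') = 3D`, `h(v^{(j)}) = 4D + j` (layers counted from `0`),
`h(t') = 6D`, `h(t) = 9D` rises by exactly `ℓ(e)` along every horizontal edge and is constant
along vertical ones. Hence `d(s,x) ≤ h(x)`, `d(x,t) ≤ 9D - h(x)` and `len G̃ = 9D`; the edge
detour of a horizontal edge is at most `9D + ℓ(e)(γ - 1) ≤ 9Dγ`, that of a vertical one at most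
`9D + γ`, which is `≤ 9Dγ` exactly when `γ ≥ 1 + 1/(9D - 1)`.
-/

open scoped ENNReal

/-- Cost of a chain (list of vertices): sum of the length function over consecutive pairs. -/
noncomputable def chainCost {α : Type} (len : α → α → ℝ≥0∞) : List α → ℝ≥0∞
  | a :: b :: l => len a b + chainCost len (b :: l)
  | _ => 0
  termination_by l => l.length

/-- A finite weighted multigraph with two distinguished vertices `s` and `t`.
Edge lengths take values in `ℝ≥0∞`. -/
structure STGraph where
  V : Type
  E : Type
  finV : Fintype V
  finE : Fintype E
  ends : E → V × V
  elen : E → ℝ≥0∞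
  s : V
  t : V

attribute [instance] STGraph.finV STGraph.finE

namespace STGraph

/-- The length between two vertices: the infimum of lengths of edges joining them
(`⊤` if there is no such edge). -/
noncomputable def lenFn (G : STGraph) (u v : G.V) : ℝ≥0∞ :=
  ⨅ e : {e : G.E // G.ends e = (u, v) ∨ G.ends e = (v, u)}, G.elen e.1

/-- The shortest-path (extended) distance between two vertices. -/
noncomputable def edist (G : STGraph) (u v : G.V) : ℝ≥0∞ :=
  ⨅ l : {l : List G.V // l.head? = some u ∧ l.getLast? = some v}, chainCost G.lenFn l.1

/-- `len G` is the distance between the two distinguished vertices. -/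
noncomputable def len (G : STGraph) : ℝ≥0∞ := G.edist G.s G.t

/-- An `s`-`t` graph is *proper* if all edge lengths are positive and finite, there are no
self-loops, the graph is connected, and `s ≠ t`. -/
def Proper (G : STGraph) : Prop :=
  (∀ e, 0 < G.elen e ∧ G.elen e < ⊤) ∧
  (∀ e, (G.ends e).1 ≠ (G.ends e).2) ∧
  (∀ u v, G.edist u v ≠ ⊤) ∧ G.s ≠ G.t

/-- The inner (non-terminal) vertices of an `s`-`t` graph. -/
abbrev Inner (G : STGraph) : Type := {v : G.V // v ≠ G.s ∧ v ≠ G.t}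

noncomputable instance (G : STGraph) : Fintype G.Inner := Fintype.ofFinite _

/-- Where a vertex `w` of `G` lands in `H ⊘ G` when the copy of `G` is glued along edge `e` of
`H`: `s(G)` and `t(G)` are identified with the endpoints of `e`. -/
noncomputable def endMap (H G : STGraph) (e : H.E) (w : G.V) : H.V ⊕ (H.E × G.Inner) := by
  classical
  exact if h : w = G.s then Sum.inl (H.ends e).1
    else if h' : w = G.t then Sum.inl (H.ends e).2
    else Sum.inr (e, ⟨w, h, h'⟩)

/-- The composition `H ⊘ G`: every edge of `H` is replaced by a copy of `G`, with lengths in the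
copy along `e` scaled by `len_H(e)/len(G)`. -/
noncomputable def oslash (H G : STGraph) : STGraph where
  V := H.V ⊕ (H.E × G.Inner)
  E := H.E × G.E
  finV := inferInstance
  finE := inferInstance
  ends := fun p => (endMap H G p.1 (G.ends p.2).1, endMap H G p.1 (G.ends p.2).2)
  elen := fun p => H.elen p.1 * G.elen p.2 / G.len
  s := Sum.inl H.s
  t := Sum.inl H.t

/-- A single edge of unit length. -/
noncomputable def unitEdge : STGraph where
  V := Bool
  E := Unit
  finV := inferInstance
  finE := inferInstance
  ends := fun _ => (false, true)
  elen := fun _ => 1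
  s := false
  t := true

/-- Recursive composition: `G^{⊘0}` is a single unit-length edge and
`G^{⊘k} = G^{⊘(k-1)} ⊘ G`. -/
noncomputable def iterOslash (G : STGraph) : ℕ → STGraph
  | 0 => unitEdge
  | k + 1 => oslash (iterOslash G k) G

end STGraph
section Tilde

open STGraph

/-- `D` is the diameter of the connected unweighted graph `G`. -/
def IsDiameter {V : Type} (G : SimpleGraph V) (D : ℕ) : Prop :=
  (∀ u v, G.dist u v ≤ D) ∧ ∃ u v, G.dist u v = D

/-- The vertex set of `G̃`: four special vertices `s = Sum.inl 0`, `s' = Sum.inl 1`,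
`t' = Sum.inl 2`, `t = Sum.inl 3`, together with the layered vertices `v^{(i)}`. -/
abbrev TVert (V : Type) (D : ℕ) : Type := Fin 4 ⊕ (V × Fin (D + 1))

/-- The edge set of `G̃`: the two edges `(s,s'), (t',t)` of length `3D`; the edges
`(s', v^{(1)})` and `(v^{(D+1)}, t')` of length `D`; the diagonal edges
`(u^{(i)}, v^{(i+1)})`; the vertical edges `(u^{(j)}, v^{(j)})` (one per unordered edge of
`G`, oriented increasingly); and the edges `(v^{(i)}, v^{(i+1)})`. -/
abbrev TEdge {V : Type} [LinearOrder V] (G : SimpleGraph V) (D : ℕ) : Type :=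
  Fin 2 ⊕ ((V ⊕ V) ⊕ (({p : V × V // G.Adj p.1 p.2} × Fin D) ⊕
    (({p : V × V // G.Adj p.1 p.2 ∧ p.1 < p.2} × Fin (D + 1)) ⊕ (V × Fin D))))

/-- The metric `s`-`t` graph `G̃` built from a finite connected unweighted graph `G`
with diameter `D` (the graph `𝐺⃗` of layers, plus tails `(s,s')`, `(t',t)` of length `3D`). -/
noncomputable def tildeG {V : Type} [Fintype V] [LinearOrder V] (G : SimpleGraph V)
    [DecidableRel G.Adj] (D : ℕ) : STGraph where
  V := TVert V D
  E := TEdge G D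
  finV := inferInstance
  finE := inferInstance
  ends := fun e => match e with
    | Sum.inl i => if i = 0 then (Sum.inl 0, Sum.inl 1) else (Sum.inl 2, Sum.inl 3)
    | Sum.inr (Sum.inl (Sum.inl v)) => (Sum.inl 1, Sum.inr (v, 0))
    | Sum.inr (Sum.inl (Sum.inr v)) => (Sum.inr (v, Fin.last D), Sum.inl 2)
    | Sum.inr (Sum.inr (Sum.inl (p, i))) =>
        (Sum.inr (p.1.1, i.castSucc), Sum.inr (p.1.2, i.succ))
    | Sum.inr (Sum.inr (Sum.inr (Sum.inl (q, j)))) => (Sum.inr (q.1.1, j), Sum.inr (q.1.2, j))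
    | Sum.inr (Sum.inr (Sum.inr (Sum.inr (v, i)))) =>
        (Sum.inr (v, i.castSucc), Sum.inr (v, i.succ))
  elen := fun e => match e with
    | Sum.inl _ => 3 * (D : ℝ≥0∞)
    | Sum.inr (Sum.inl _) => (D : ℝ≥0∞)
    | Sum.inr (Sum.inr _) => 1
  s := Sum.inl 0
  t := Sum.inl 3

/-- A horizontal edge of `G̃` is any edge which is not vertical. -/
def IsHorizontal {V : Type} [LinearOrder V] {G : SimpleGraph V} {D : ℕ} :
    TEdge G D → Prop
  | Sum.inr (Sum.inr (Sum.inr (Sum.inl _))) => False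
  | _ => True

end Tilde

section ChainCost

variable {α : Type} (len : α → α → ℝ≥0∞)

lemma chainCost_cons_cons (a b : α) (l : List α) :
    chainCost len (a :: b :: l) = len a b + chainCost len (b :: l) := by
  rw [chainCost]

lemma chainCost_singleton (a : α) : chainCost len [a] = 0 := by
  rw [chainCost]
  rintro x y l h
  simp at h

lemma chainCost_append_singleton :
    ∀ (l : List α) (a b : α), l.getLast? = some a →
      chainCost len (l ++ [b]) = chainCost len l + len a b
  | [], _, _, h => by simp at h
  | [x], a, b, h => by
      obtain rfl : x = a := by simpa using h
      simp [chainCost_cons_cons, chainCost_singleton]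
  | x :: y :: l, a, b, h => by
      rw [List.getLast?_cons_cons] at h
      have ih := chainCost_append_singleton (y :: l) a b h
      rw [List.cons_append] at ih
      show chainCost len (x :: y :: (l ++ [b])) = _
      rw [chainCost_cons_cons, ih, chainCost_cons_cons, add_assoc]

end ChainCost

namespace STGraph

section Metric

variable {G : STGraph}

lemma edist_le_chainCost {u v : G.V} (l : List G.V) (hu : l.head? = some u)
    (hv : l.getLast? = some v) : G.edist u v ≤ chainCost G.lenFn l :=
  iInf_le (fun l : {l : List G.V // l.head? = some u ∧ l.getLast? = some v} =>
    chainCost G.lenFn l.1) ⟨l, hu, hv⟩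

lemma edist_self (u : G.V) : G.edist u u = 0 :=
  nonpos_iff_eq_zero.mp <| by
    simpa [chainCost_singleton] using edist_le_chainCost (G := G) [u] rfl rfl

lemma lenFn_le_elen {u v : G.V} (e : G.E) (h : G.ends e = (u, v) ∨ G.ends e = (v, u)) :
    G.lenFn u v ≤ G.elen e :=
  iInf_le (fun e : {e : G.E // G.ends e = (u, v) ∨ G.ends e = (v, u)} => G.elen e.1) ⟨e, h⟩

lemma edist_le_lenFn (u v : G.V) : G.edist u v ≤ G.lenFn u v := by
  simpa [chainCost_cons_cons, chainCost_singleton] using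
    edist_le_chainCost (G := G) [u, v] rfl rfl

lemma edist_le_elen {u v : G.V} (e : G.E) (h : G.ends e = (u, v) ∨ G.ends e = (v, u)) :
    G.edist u v ≤ G.elen e :=
  (edist_le_lenFn u v).trans (lenFn_le_elen e h)

lemma edist_le_edist_add_lenFn (u a b : G.V) : G.edist u b ≤ G.edist u a + G.lenFn a b := by
  refine le_trans ?_ ENNReal.iInf_add.ge
  refine le_iInf fun ⟨l, hu, ha⟩ => ?_
  have hl : l ≠ [] := by rintro rfl; simp at hu
  rw [← chainCost_append_singleton _ l a b ha]
  exact edist_le_chainCost _ (by rwa [List.head?_append_of_ne_nil _ hl]) List.getLast?_concat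

lemma le_add_mul_edist (Φ : G.V → ℝ≥0∞) {c : ℝ≥0∞} (hc0 : c ≠ 0) (hct : c ≠ ⊤)
    (hΦ : ∀ e, Φ (G.ends e).2 ≤ Φ (G.ends e).1 + c * G.elen e ∧
      Φ (G.ends e).1 ≤ Φ (G.ends e).2 + c * G.elen e)
    (u v : G.V) : Φ v ≤ Φ u + c * G.edist u v := by
  have hlen : ∀ a b, Φ b ≤ Φ a + c * G.lenFn a b := by
    intro a b
    cases isEmpty_or_nonempty {e : G.E // G.ends e = (a, b) ∨ G.ends e = (b, a)} with
    | inl h => simp [lenFn, iInf_of_empty, ENNReal.mul_top hc0]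
    | inr h =>
      rw [lenFn, ENNReal.mul_iInf_of_ne hc0 hct, ENNReal.add_iInf]
      refine le_iInf fun ⟨e, he⟩ => ?_
      rcases he with he | he
      · simpa [he] using (hΦ e).1
      · simpa [he] using (hΦ e).2
  have hchain : ∀ (l : List G.V) (a : G.V), l.head? = some a → l.getLast? = some v →
      Φ v ≤ Φ a + c * chainCost G.lenFn l := by
    intro l
    induction l with
    | nil => simp
    | cons x l ih =>
      rintro a ha hv
      obtain rfl : x = a := by simpa using ha
      cases l with
      | nil =>
        obtain rfl : x = v := by simpa using hv
        exact le_self_add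
      | cons y l =>
        rw [List.getLast?_cons_cons] at hv
        calc Φ v ≤ Φ y + c * chainCost G.lenFn (y :: l) := ih y rfl hv
          _ ≤ Φ x + c * G.lenFn x y + c * chainCost G.lenFn (y :: l) := by gcongr; exact hlen x y
          _ = Φ x + c * chainCost G.lenFn (x :: y :: l) := by
            rw [chainCost_cons_cons, mul_add, add_assoc]
  rw [edist, ENNReal.mul_iInf_of_ne hc0 hct, ENNReal.add_iInf]
  exact le_iInf fun ⟨l, hu, hv⟩ => hchain l u hu hv

lemma le_add_edist (Φ : G.V → ℝ≥0∞)
    (hΦ : ∀ e, Φ (G.ends e).2 ≤ Φ (G.ends e).1 + G.elen e ∧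
      Φ (G.ends e).1 ≤ Φ (G.ends e).2 + G.elen e)
    (u v : G.V) : Φ v ≤ Φ u + G.edist u v := by
  simpa using le_add_mul_edist Φ one_ne_zero ENNReal.one_ne_top (by simpa using hΦ) u v

lemma edist_triangle (u v w : G.V) : G.edist u w ≤ G.edist u v + G.edist v w :=
  le_add_edist (G.edist u) (fun e =>
    ⟨(edist_le_edist_add_lenFn u _ _).trans (by gcongr; exact lenFn_le_elen e (Or.inl rfl)),
      (edist_le_edist_add_lenFn u _ _).trans (by gcongr; exact lenFn_le_elen e (Or.inr rfl))⟩) v w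

lemma edist_comm (u v : G.V) : G.edist u v = G.edist v u := by
  have key : ∀ a b : G.V, G.edist b a ≤ G.edist a b := fun a b => by
    simpa [edist_self] using le_add_edist (G.edist · a) (fun e =>
      ⟨(edist_triangle _ (G.ends e).1 a).trans
          (by rw [add_comm]; gcongr; exact edist_le_elen e (Or.inr rfl)),
        (edist_triangle _ (G.ends e).2 a).trans
          (by rw [add_comm]; gcongr; exact edist_le_elen e (Or.inl rfl))⟩) a b
  exact le_antisymm (key v u) (key u v)

lemma add_edist_le_of_descent (φ : G.V → ℕ) (u : G.V)
    (h : ∀ x ≠ u, ∃ y, φ y < φ x ∧ (φ y : ℝ≥0∞) + G.edist y x ≤ φ x) (x : G.V) :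
    (φ u : ℝ≥0∞) + G.edist u x ≤ φ x := by
  induction hx : φ x using Nat.strong_induction_on generalizing x with
  | _ n ih =>
    subst hx
    by_cases hxu : x = u
    · rw [hxu, edist_self, add_zero]
    obtain ⟨y, hlt, hy⟩ := h x hxu
    calc (φ u : ℝ≥0∞) + G.edist u x ≤ φ u + G.edist u y + G.edist y x := by
          rw [add_assoc]; gcongr; exact edist_triangle _ _ _
      _ ≤ φ y + G.edist y x := by gcongr; exact ih _ hlt y rfl
      _ ≤ φ x := hy

lemma edist_map_le_mul_edist {G' : STGraph} (φ : G.V → G'.V) {c : ℝ≥0∞} (hc0 : c ≠ 0)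
    (hct : c ≠ ⊤) (hφ : ∀ e, G'.edist (φ (G.ends e).1) (φ (G.ends e).2) ≤ c * G.elen e)
    (u v : G.V) : G'.edist (φ u) (φ v) ≤ c * G.edist u v := by
  simpa [edist_self] using le_add_mul_edist (fun x => G'.edist (φ u) (φ x)) hc0 hct (fun e =>
    ⟨(edist_triangle _ (φ (G.ends e).1) _).trans (by gcongr; exact hφ e),
      (edist_triangle _ (φ (G.ends e).2) _).trans
        (by rw [edist_comm (φ (G.ends e).2)]; gcongr; exact hφ e)⟩) u v

end Metric

def PosFiniteLengths (G : STGraph) : Prop := ∀ e, G.elen e ≠ 0 ∧ G.elen e ≠ ⊤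

section Oslash

variable {H T : STGraph}

lemma endMap_s (e : H.E) : endMap H T e T.s = Sum.inl (H.ends e).1 := by
  simp [endMap]

lemma endMap_t (hst : T.t ≠ T.s) (e : H.E) : endMap H T e T.t = Sum.inl (H.ends e).2 := by
  simp [endMap, hst]

lemma endMap_of_ne (e : H.E) {w : T.V} (hs : w ≠ T.s) (ht : w ≠ T.t) :
    endMap H T e w = Sum.inr (e, ⟨w, hs, ht⟩) := by
  simp [endMap, hs, ht]

lemma oslash_elen (e : H.E) (f : T.E) :
    (H.oslash T).elen (e, f) = H.elen e / T.len * T.elen f :=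
  ENNReal.mul_div_right_comm

/-- The distance from `inl u` in `H ⊘ T`, computed by leaving each copy of `T` through one of its
two ends. -/
noncomputable def oslashPot (H T : STGraph) (u : H.V) : (H.oslash T).V → ℝ≥0∞ :=
  Sum.elim (H.edist u) fun q =>
    min (H.edist u (H.ends q.1).1 + H.elen q.1 / T.len * T.edist T.s q.2.1)
      (H.edist u (H.ends q.1).2 + H.elen q.1 / T.len * T.edist q.2.1 T.t)

variable (h0 : T.len ≠ 0) (ht : T.len ≠ ⊤)
include h0 ht

lemma PosFiniteLengths.oslash (hH : PosFiniteLengths H) (hT : PosFiniteLengths T) :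
    PosFiniteLengths (H.oslash T) := fun ⟨e, f⟩ => by
  rw [oslash_elen]
  exact ⟨mul_ne_zero (by simp [ENNReal.div_eq_zero_iff, (hH e).1, ht]) (hT f).1,
    ENNReal.mul_ne_top (by simp [ENNReal.div_eq_top, (hH e).2, h0]) (hT f).2⟩

lemma edist_endMap_le {e : H.E} (he : H.elen e ≠ 0 ∧ H.elen e ≠ ⊤) (a b : T.V) :
    (H.oslash T).edist (endMap H T e a) (endMap H T e b) ≤ H.elen e / T.len * T.edist a b :=
  edist_map_le_mul_edist (G' := H.oslash T) (endMap H T e) (c := H.elen e / T.len)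
    (by simp [ENNReal.div_eq_zero_iff, he.1, ht]) (by simp [ENNReal.div_eq_top, he.2, h0])
    (fun f => (edist_le_elen (G := H.oslash T) (e, f) (Or.inl rfl)).trans_eq (oslash_elen e f))
    a b

lemma edist_inl_le (hst : T.t ≠ T.s) (hH : PosFiniteLengths H) (u v : H.V) :
    (H.oslash T).edist (Sum.inl u) (Sum.inl v) ≤ H.edist u v := by
  have key := edist_map_le_mul_edist (G' := H.oslash T) Sum.inl one_ne_zero ENNReal.one_ne_top
    (fun e => ?_) u v
  · simpa using key
  calc (H.oslash T).edist (Sum.inl (H.ends e).1) (Sum.inl (H.ends e).2)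
      = (H.oslash T).edist (endMap H T e T.s) (endMap H T e T.t) := by
        rw [endMap_s, endMap_t hst]
    _ ≤ H.elen e / T.len * T.len := edist_endMap_le h0 ht (hH e) _ _
    _ = 1 * H.elen e := by rw [ENNReal.div_mul_cancel h0 ht, one_mul]

lemma oslashPot_endMap (u : H.V) (e : H.E) (w : T.V) :
    oslashPot H T u (endMap H T e w) =
      min (H.edist u (H.ends e).1 + H.elen e / T.len * T.edist T.s w)
        (H.edist u (H.ends e).2 + H.elen e / T.len * T.edist w T.t) := by
  have hc : H.elen e / T.len * T.edist T.s T.t = H.elen e := ENNReal.div_mul_cancel h0 ht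
  by_cases hws : w = T.s
  · subst hws
    rw [endMap_s, edist_self, mul_zero, add_zero, hc, min_eq_left]
    · rfl
    exact (edist_triangle _ _ _).trans (by gcongr; exact edist_le_elen e (Or.inr rfl))
  by_cases hwt : w = T.t
  · subst hwt
    rw [endMap_t hws, edist_self, mul_zero, add_zero, hc, min_eq_right]
    · rfl
    exact (edist_triangle _ _ _).trans (by gcongr; exact edist_le_elen e (Or.inl rfl))
  rw [endMap_of_ne e hws hwt]
  rfl

lemma le_edist_inl (u v : H.V) : H.edist u v ≤ (H.oslash T).edist (Sum.inl u) (Sum.inl v) := by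
  have key := le_add_edist (oslashPot H T u) (fun p => ?_) (Sum.inl u) (Sum.inl v)
  · simpa [oslashPot, edist_self] using key
  obtain ⟨e, f⟩ := p
  set c := H.elen e / T.len
  have hLip : ∀ x y : T.V,
      min (H.edist u (H.ends e).1 + c * T.edist T.s y) (H.edist u (H.ends e).2 + c * T.edist y T.t)
        ≤ min (H.edist u (H.ends e).1 + c * T.edist T.s x)
            (H.edist u (H.ends e).2 + c * T.edist x T.t) + c * T.edist x y := by
    intro x y
    rw [← min_add_add_right]
    refine min_le_min ?_ ?_
    · calc _ ≤ H.edist u (H.ends e).1 + c * (T.edist T.s x + T.edist x y) := by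
            gcongr; exact edist_triangle _ _ _
        _ = _ := by ring
    · calc _ ≤ H.edist u (H.ends e).2 + c * (T.edist y x + T.edist x T.t) := by
            gcongr; exact edist_triangle _ _ _
        _ = _ := by rw [edist_comm y x]; ring
  show oslashPot H T u (endMap H T e (T.ends f).2) ≤
      oslashPot H T u (endMap H T e (T.ends f).1) + (H.oslash T).elen (e, f) ∧
    oslashPot H T u (endMap H T e (T.ends f).1) ≤
      oslashPot H T u (endMap H T e (T.ends f).2) + (H.oslash T).elen (e, f)
  rw [oslashPot_endMap h0 ht, oslashPot_endMap h0 ht, oslash_elen]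
  exact ⟨(hLip _ _).trans (by gcongr; exact edist_le_elen f (Or.inl rfl)),
    (hLip _ _).trans (by gcongr; exact edist_le_elen f (Or.inr rfl))⟩

lemma len_le_len_oslash : H.len ≤ (H.oslash T).len :=
  le_edist_inl h0 ht H.s H.t

end Oslash

def TriBounded (G : STGraph) (γ : ℝ≥0∞) : Prop :=
  (∀ v, G.edist G.s v + G.edist v G.t ≤ G.len * γ) ∧
    ∀ e, G.edist G.s (G.ends e).1 + G.elen e * γ + G.edist (G.ends e).2 G.t ≤ G.len * γ

section TriBoundedOslash

variable {H T : STGraph} (h0 : T.len ≠ 0) (ht : T.len ≠ ⊤) (hst : T.t ≠ T.s)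
  (hH : PosFiniteLengths H)
include h0 ht hst hH

lemma edist_s_endMap_le (e : H.E) (w : T.V) :
    (H.oslash T).edist (H.oslash T).s (endMap H T e w) ≤
      H.edist H.s (H.ends e).1 + H.elen e / T.len * T.edist T.s w :=
  calc (H.oslash T).edist (Sum.inl H.s) (endMap H T e w)
      ≤ (H.oslash T).edist (Sum.inl H.s) (Sum.inl (H.ends e).1) +
          (H.oslash T).edist (endMap H T e T.s) (endMap H T e w) := by
        rw [endMap_s]; exact edist_triangle _ _ _
    _ ≤ _ := add_le_add (edist_inl_le h0 ht hst hH _ _) (edist_endMap_le h0 ht (hH e) _ _)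

lemma edist_endMap_t_le (e : H.E) (w : T.V) :
    (H.oslash T).edist (endMap H T e w) (H.oslash T).t ≤
      H.elen e / T.len * T.edist w T.t + H.edist (H.ends e).2 H.t :=
  calc (H.oslash T).edist (endMap H T e w) (Sum.inl H.t)
      ≤ (H.oslash T).edist (endMap H T e w) (endMap H T e T.t) +
          (H.oslash T).edist (Sum.inl (H.ends e).2) (Sum.inl H.t) := by
        rw [endMap_t hst]; exact edist_triangle _ _ _
    _ ≤ _ := add_le_add (edist_endMap_le h0 ht (hH e) _ _) (edist_inl_le h0 ht hst hH _ _)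

lemma TriBounded.oslash {γ : ℝ≥0∞} (hHγ : TriBounded H γ) (hTγ : TriBounded T γ) :
    TriBounded (H.oslash T) γ := by
  have hcopy : ∀ e x, x ≤ T.len * γ →
      H.edist H.s (H.ends e).1 + H.elen e / T.len * x + H.edist (H.ends e).2 H.t ≤
        (H.oslash T).len * γ := fun e x hx =>
    calc _ ≤ H.edist H.s (H.ends e).1 + H.elen e * γ + H.edist (H.ends e).2 H.t := by
          grw [hx, ← mul_assoc, ENNReal.div_mul_cancel h0 ht]
      _ ≤ H.len * γ := hHγ.2 e
      _ ≤ (H.oslash T).len * γ := by grw [len_le_len_oslash h0 ht]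
  refine ⟨?_, fun ⟨e, f⟩ => ?_⟩
  · rintro (v | ⟨e, w, hws, hwt⟩)
    · calc _ ≤ H.edist H.s v + H.edist v H.t :=
            add_le_add (edist_inl_le h0 ht hst hH _ _) (edist_inl_le h0 ht hst hH _ _)
        _ ≤ H.len * γ := hHγ.1 v
        _ ≤ (H.oslash T).len * γ := by grw [len_le_len_oslash h0 ht]
    · rw [← endMap_of_ne e hws hwt]
      grw [edist_s_endMap_le h0 ht hst hH, edist_endMap_t_le h0 ht hst hH, ← hcopy e _ (hTγ.1 w)]
      apply le_of_eq
      ring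
  · show (H.oslash T).edist _ (endMap H T e (T.ends f).1) + (H.oslash T).elen (e, f) * γ +
      (H.oslash T).edist (endMap H T e (T.ends f).2) _ ≤ _
    grw [edist_s_endMap_le h0 ht hst hH, edist_endMap_t_le h0 ht hst hH, oslash_elen,
      ← hcopy e _ (hTγ.2 f)]
    apply le_of_eq
    ring

end TriBoundedOslash

lemma one_le_unitEdge_len : 1 ≤ unitEdge.len := by
  have h := le_add_edist (G := unitEdge) (fun b : Bool => if b then 1 else 0)
    (fun _ => by simp [unitEdge]) false true
  simp only [if_true, Bool.false_eq_true, if_false, zero_add] at h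
  exact h

lemma unitEdge_triBounded {γ : ℝ≥0∞} (hγ : 1 ≤ γ) : TriBounded unitEdge γ := by
  refine ⟨fun v => ?_, fun _ => ?_⟩
  · cases v
    · show unitEdge.edist unitEdge.s unitEdge.s + unitEdge.len ≤ _
      rw [edist_self, zero_add]
      exact le_mul_of_one_le_right zero_le hγ
    · show unitEdge.len + unitEdge.edist unitEdge.t unitEdge.t ≤ _
      rw [edist_self, add_zero]
      exact le_mul_of_one_le_right zero_le hγ
  · simpa [edist_self, unitEdge] using le_mul_of_one_le_left zero_le one_le_unitEdge_len

section Iterate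

variable {T : STGraph} (h0 : T.len ≠ 0) (ht : T.len ≠ ⊤)
include h0 ht

lemma posFiniteLengths_iterOslash (hT : PosFiniteLengths T) :
    ∀ k, PosFiniteLengths (iterOslash T k)
  | 0 => fun _ => ⟨one_ne_zero, ENNReal.one_ne_top⟩
  | k + 1 => (posFiniteLengths_iterOslash hT k).oslash h0 ht hT

lemma triBounded_iterOslash (hst : T.t ≠ T.s) (hT : PosFiniteLengths T) {γ : ℝ≥0∞}
    (hγ : 1 ≤ γ) (hTγ : TriBounded T γ) : ∀ k, TriBounded (iterOslash T k) γ
  | 0 => unitEdge_triBounded hγ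
  | k + 1 => (triBounded_iterOslash hst hT hγ hTγ k).oslash h0 ht hst
      (posFiniteLengths_iterOslash h0 ht hT k) hTγ

end Iterate

end STGraph

section TildeHeight

open STGraph

def tildeHeight {V : Type} (D : ℕ) : TVert V D → ℕ
  | Sum.inl i => 3 * D * i
  | Sum.inr (_, j) => 4 * D + j

lemma tildeHeight_le {V : Type} (D : ℕ) (x : TVert V D) : tildeHeight D x ≤ 9 * D := by
  rcases x with i | ⟨v, j⟩
  · have := i.isLt
    simp only [tildeHeight]
    nlinarith
  · have := j.isLt
    simp only [tildeHeight]
    omega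

def tildeLen {V : Type} [LinearOrder V] (G : SimpleGraph V) (D : ℕ) : TEdge G D → ℕ
  | Sum.inl _ => 3 * D
  | Sum.inr (Sum.inl _) => D
  | Sum.inr (Sum.inr _) => 1

lemma one_le_tildeLen {V : Type} [LinearOrder V] (G : SimpleGraph V) (D : ℕ) (hD : 1 ≤ D)
    (f : TEdge G D) : 1 ≤ tildeLen G D f := by
  rcases f with _ | _ | _ <;> simp [tildeLen] <;> omega

variable {V : Type} [Fintype V] [LinearOrder V] (G : SimpleGraph V) [DecidableRel G.Adj] (D : ℕ)

lemma tildeG_elen (f : (tildeG G D).E) : (tildeG G D).elen f = tildeLen G D f := by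
  rcases f with _ | _ | _ <;> simp [tildeG, tildeLen]

lemma tildeG_posFiniteLengths (hD : 1 ≤ D) : PosFiniteLengths (tildeG G D) := fun f => by
  rw [tildeG_elen]
  have := one_le_tildeLen G D hD f
  exact ⟨Nat.cast_ne_zero.mpr (by omega), ENNReal.natCast_ne_top _⟩

lemma tildeHeight_s : tildeHeight D (tildeG G D).s = 0 := by
  simp [tildeG, tildeHeight]

lemma tildeHeight_t : tildeHeight D (tildeG G D).t = 9 * D := by
  simp [tildeG, tildeHeight]
  ring

lemma tildeHeight_snd_of_isHorizontal {f : (tildeG G D).E} (hf : IsHorizontal f) :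
    tildeHeight D ((tildeG G D).ends f).2 =
      tildeHeight D ((tildeG G D).ends f).1 + tildeLen G D f := by
  rcases f with i | (v | v) | (⟨p, i⟩ | (⟨q, j⟩ | ⟨v, i⟩))
  · fin_cases i <;> simp [tildeG, tildeHeight, tildeLen]
    ring
  all_goals first | exact False.elim hf | simp [tildeG, tildeHeight, tildeLen]
  all_goals ring

lemma tildeHeight_snd_of_not_isHorizontal {f : (tildeG G D).E} (hf : ¬IsHorizontal f) :
    tildeHeight D ((tildeG G D).ends f).2 = tildeHeight D ((tildeG G D).ends f).1 ∧
      tildeLen G D f = 1 := by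
  rcases f with _ | (_ | _) | (_ | (⟨q, j⟩ | _)) <;> first | exact (hf trivial).elim | skip
  simp [tildeG, tildeHeight, tildeLen]

end TildeHeight

section TildeDistances

open STGraph

variable {V : Type} [Fintype V] [LinearOrder V] (G : SimpleGraph V) [DecidableRel G.Adj] (D : ℕ)
  [Nonempty V]

lemma exists_isHorizontal_ends_snd_eq {x : (tildeG G D).V} (hx : x ≠ (tildeG G D).s) :
    ∃ f : (tildeG G D).E, IsHorizontal f ∧ ((tildeG G D).ends f).2 = x := by
  obtain ⟨v⟩ := ‹Nonempty V›
  rcases x with i | ⟨w, j⟩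
  · fin_cases i
    · exact (hx rfl).elim
    · exact ⟨Sum.inl 0, trivial, rfl⟩
    · exact ⟨Sum.inr (Sum.inl (Sum.inr v)), trivial, rfl⟩
    · exact ⟨Sum.inl 1, trivial, rfl⟩
  · induction j using Fin.cases with
    | zero => exact ⟨Sum.inr (Sum.inl (Sum.inl w)), trivial, rfl⟩
    | succ i => exact ⟨Sum.inr (Sum.inr (Sum.inr (Sum.inr (w, i)))), trivial, rfl⟩

lemma exists_isHorizontal_ends_fst_eq {x : (tildeG G D).V} (hx : x ≠ (tildeG G D).t) :
    ∃ f : (tildeG G D).E, IsHorizontal f ∧ ((tildeG G D).ends f).1 = x := by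
  obtain ⟨v⟩ := ‹Nonempty V›
  rcases x with i | ⟨w, j⟩
  · fin_cases i
    · exact ⟨Sum.inl 0, trivial, rfl⟩
    · exact ⟨Sum.inr (Sum.inl (Sum.inl v)), trivial, rfl⟩
    · exact ⟨Sum.inl 1, trivial, rfl⟩
    · exact (hx rfl).elim
  · induction j using Fin.lastCases with
    | last => exact ⟨Sum.inr (Sum.inl (Sum.inr w)), trivial, rfl⟩
    | cast i => exact ⟨Sum.inr (Sum.inr (Sum.inr (Sum.inr (w, i)))), trivial, rfl⟩

variable {D} (hD : 1 ≤ D)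
include hD

lemma tildeG_edist_s_le (x : (tildeG G D).V) :
    (tildeG G D).edist (tildeG G D).s x ≤ tildeHeight D x := by
  have key := add_edist_le_of_descent (tildeHeight D) (tildeG G D).s (fun x hx => ?_) x
  · simpa [tildeHeight_s] using key
  obtain ⟨f, hf, rfl⟩ := exists_isHorizontal_ends_snd_eq G D hx
  have hup := tildeHeight_snd_of_isHorizontal G D hf
  refine ⟨((tildeG G D).ends f).1, by have := one_le_tildeLen G D hD f; omega, ?_⟩
  rw [hup, Nat.cast_add, ← tildeG_elen]
  gcongr
  exact edist_le_elen f (Or.inl rfl)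

lemma tildeG_edist_t_le (x : (tildeG G D).V) :
    (tildeG G D).edist x (tildeG G D).t ≤ (9 * D - tildeHeight D x : ℕ) := by
  have key := add_edist_le_of_descent (fun x => 9 * D - tildeHeight D x) (tildeG G D).t
    (fun x hx => ?_) x
  · rw [edist_comm]
    simpa [tildeHeight_t] using key
  obtain ⟨f, hf, rfl⟩ := exists_isHorizontal_ends_fst_eq G D hx
  have hup := tildeHeight_snd_of_isHorizontal G D hf
  have hle := tildeHeight_le D ((tildeG G D).ends f).2
  have hpos := one_le_tildeLen G D hD f
  refine ⟨((tildeG G D).ends f).2, by omega, ?_⟩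
  calc ((9 * D - tildeHeight D ((tildeG G D).ends f).2 : ℕ) : ℝ≥0∞) +
        (tildeG G D).edist ((tildeG G D).ends f).2 ((tildeG G D).ends f).1
      ≤ (9 * D - tildeHeight D ((tildeG G D).ends f).2 : ℕ) + tildeLen G D f := by
        rw [← tildeG_elen]; gcongr; exact edist_le_elen f (Or.inr rfl)
    _ = (9 * D - tildeHeight D ((tildeG G D).ends f).1 : ℕ) := by
        rw [← Nat.cast_add]; congr 1; omega

lemma tildeG_len : (tildeG G D).len = 9 * D := by
  refine le_antisymm ?_ ?_
  · simpa [len, tildeHeight_t] using tildeG_edist_s_le G hD (tildeG G D).t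
  · have key := le_add_edist (fun x => (tildeHeight D x : ℝ≥0∞)) (fun f => ?_)
      (tildeG G D).s (tildeG G D).t
    · simpa [len, tildeHeight_s, tildeHeight_t] using key
    by_cases hf : IsHorizontal f
    · rw [tildeHeight_snd_of_isHorizontal G D hf, tildeG_elen, Nat.cast_add]
      exact ⟨le_rfl, le_add_right le_self_add⟩
    · rw [(tildeHeight_snd_of_not_isHorizontal G D hf).1]
      exact ⟨le_self_add, le_self_add⟩

lemma tildeG_triBounded {γ : ℝ≥0∞} (h1 : 1 ≤ γ) (hγ : 9 * (D : ℝ≥0∞) + γ ≤ 9 * D * γ) :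
    TriBounded (tildeG G D) γ := by
  rw [TriBounded, tildeG_len G hD]
  refine ⟨fun x => ?_, fun f => ?_⟩
  · grw [tildeG_edist_s_le G hD, tildeG_edist_t_le G hD, ← Nat.cast_add,
      Nat.add_sub_cancel' (tildeHeight_le D x), ← le_mul_of_one_le_right zero_le h1]
    norm_cast
  grw [tildeG_edist_s_le G hD, tildeG_edist_t_le G hD, tildeG_elen]
  have hle := tildeHeight_le D ((tildeG G D).ends f).2
  by_cases hf : IsHorizontal f
  · have hup := tildeHeight_snd_of_isHorizontal G D hf
    have hsum : tildeHeight D ((tildeG G D).ends f).1 +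
        (9 * D - tildeHeight D ((tildeG G D).ends f).2) = 9 * D - tildeLen G D f := by omega
    calc _ = ((9 * D - tildeLen G D f : ℕ) : ℝ≥0∞) + tildeLen G D f * γ := by
          rw [add_right_comm, ← Nat.cast_add, hsum]
      _ ≤ (9 * D - tildeLen G D f : ℕ) * γ + tildeLen G D f * γ := by
          grw [← le_mul_of_one_le_right zero_le h1]
      _ = 9 * D * γ := by
          rw [← add_mul, ← Nat.cast_add, Nat.sub_add_cancel (by omega)]
          norm_cast
  · obtain ⟨hflat, hlen⟩ := tildeHeight_snd_of_not_isHorizontal G D hf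
    rw [hflat, hlen, Nat.cast_one, one_mul, add_right_comm, ← Nat.cast_add,
      Nat.add_sub_cancel' (by rwa [hflat] at hle)]
    push_cast
    exact hγ

end TildeDistances

lemma self_add_eq_mul_one_add_one_div_sub_one {n : ℝ≥0∞} (h1 : 1 < n) (ht : n ≠ ⊤) :
    n + (1 + 1 / (n - 1)) = n * (1 + 1 / (n - 1)) := by
  obtain ⟨m, rfl⟩ : ∃ m, n = m + 1 := ⟨n - 1, (tsub_add_cancel_of_le h1.le).symm⟩
  have hm0 : m ≠ 0 := by rintro rfl; simp at h1
  have hmt : m ≠ ⊤ := by rintro rfl; simp at ht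
  rw [ENNReal.add_sub_cancel_right ENNReal.one_ne_top, mul_add, mul_one, add_mul, one_mul,
    ENNReal.mul_div_cancel hm0 hmt, add_assoc]

open STGraph in
theorem tri_le_general {V : Type} [Fintype V] [LinearOrder V] (G : SimpleGraph V)
    [DecidableRel G.Adj] (hconn : G.Connected) (D : ℕ) (hD : 1 ≤ D) (k : ℕ) :
    (⨆ v : (iterOslash (tildeG G D) k).V,
        ((iterOslash (tildeG G D) k).edist (iterOslash (tildeG G D) k).s v +
          (iterOslash (tildeG G D) k).edist v (iterOslash (tildeG G D) k).t)) ≤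
      (iterOslash (tildeG G D) k).len * (1 + 1 / (9 * (D : ℝ≥0∞) - 1)) := by
  have := hconn.nonempty
  have h9 : (1 : ℝ≥0∞) < 9 * D := by exact_mod_cast (by omega : 1 < 9 * D)
  have h9t : 9 * (D : ℝ≥0∞) ≠ ⊤ := by finiteness
  have hlen := tildeG_len G hD
  have hγ := self_add_eq_mul_one_add_one_div_sub_one h9 h9t
  exact iSup_le (triBounded_iterOslash (hlen ▸ (zero_lt_one.trans h9).ne') (hlen ▸ h9t)
    (by simp [tildeG]) (tildeG_posFiniteLengths G D hD) le_self_add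
    (tildeG_triBounded G hD le_self_add hγ.le) k).1

open STGraph in
/-- For a finite connected unweighted graph `G` with diameter `D ≥ 1` and `k ≥ 1`,
`tri(G̃^{⊘k}) ≤ len(G̃^{⊘k}) · (1 + 1/(9D − 1))`, where
`tri(G') = max_{v} (d(s,v) + d(v,t))`. -/
theorem tri_le {V : Type} [Fintype V] [LinearOrder V] (G : SimpleGraph V)
    [DecidableRel G.Adj] (hconn : G.Connected) (D : ℕ) (hD : 1 ≤ D)
    (hdiam : IsDiameter G D) (k : ℕ) (hk : 1 ≤ k) :
    (⨆ v : (iterOslash (tildeG G D) k).V,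
        ((iterOslash (tildeG G D) k).edist (iterOslash (tildeG G D) k).s v +
          (iterOslash (tildeG G D) k).edist v (iterOslash (tildeG G D) k).t)) ≤
      (iterOslash (tildeG G D) k).len * (1 + 1 / (9 * (D : ℝ≥0∞) - 1)) :=
  tri_le_general G hconn D hD k
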